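/- arXiv:1409.6002 — 5 statements merged into one kernel-verified Lean document; each statement's English description precedes it below -/
import Mathlib

section
/- Let r ≥ 2 and let G be a 2r-regular graph of order n. If there exist r completely independent spanning trees T_1, …, T_r in G, then for every integer i with 1 ≤ i ≤ r one has ⌈(n−2)/r⌉ ≤ |inn(T_i)| ≤ n − ⌈(n−2)/r⌉·(r−1). -/
/-!
Every vertex has degree at least `1` in each of the `r` edge-disjoint spanning trees and
degree `2r` in `G`, so its degree in any single tree is at most `r + 1`. Counting the degree
sum `2(n - 1)` of `T_i` (leaves contribute `1`, inner vertices at most `r + 1`) gives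
`n - 2 ≤ r·|inn(T_i)|`, the lower bound. Complete independence makes the sets `inn(T_j)`
pairwise disjoint, so `|inn(T_i)| + (r - 1)·⌈(n - 2)/r⌉ ≤ ∑ⱼ |inn(T_j)| ≤ n`.
-/

open SimpleGraph

noncomputable def degN {V : Type*} (T : SimpleGraph V) (v : V) : ℕ :=
  (T.neighborSet v).ncard

def IsSpanningTreeOf {V : Type*} (G T : SimpleGraph V) : Prop :=
  T ≤ G ∧ T.IsTree

def inn {V : Type*} (T : SimpleGraph V) : Set V :=
  {v | 2 ≤ degN T v}

def AreCISTs {V : Type*} {r : ℕ} (G : SimpleGraph V) (T : Fin r → SimpleGraph V) : Prop :=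
  (∀ i, IsSpanningTreeOf G (T i)) ∧
  (∀ i j, i ≠ j → Disjoint ((T i).edgeSet) ((T j).edgeSet)) ∧
  (∀ v : V, ∀ i j, 1 < degN (T i) v → 1 < degN (T j) v → i = j)

def IsRegularDeg {V : Type*} (G : SimpleGraph V) (d : ℕ) : Prop :=
  ∀ v, degN G v = d

def lostEdges {V : Type*} {r : ℕ} (G : SimpleGraph V) (T : Fin r → SimpleGraph V) :
    Set (Sym2 V) :=
  G.edgeSet \ ⋃ i, (T i).edgeSet

/-- The paper's `E^l_T`. -/
def lostAt {V : Type*} (G T : SimpleGraph V) : Set (Sym2 V) :=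
  {e | e ∈ G.edgeSet ∧ (∀ v ∈ e, v ∈ inn T) ∧ e ∉ T.edgeSet}

/-- The paper's potential extra degree `ped(T)` of a spanning tree of a `2r`-regular graph
of order `n`. -/
noncomputable def ped {V : Type*} (n r : ℕ) (T : SimpleGraph V) : ℤ :=
  ((inn T).ncard : ℤ) * r - n + 2

open Finset Function

theorem Finset.add_card_sub_one_mul_le_sum {ι : Type*} [Fintype ι] {f : ι → ℕ} {m : ℕ}
    (hf : ∀ j, m ≤ f j) (i : ι) : f i + (Fintype.card ι - 1) * m ≤ ∑ j, f j := by
  classical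
  have hrest : (Fintype.card ι - 1) * m ≤ ∑ j ∈ univ.erase i, f j := by
    simpa [card_erase_of_mem] using
      card_nsmul_le_sum (univ.erase i) f m fun j _ => hf j
  rw [← add_sum_erase _ _ (mem_univ i)]
  omega

theorem Set.sum_ncard_le_card {α ι : Type*} [Fintype α] [Fintype ι] {s : ι → Set α}
    (hs : Pairwise (Disjoint on s)) : ∑ i, (s i).ncard ≤ Fintype.card α := by
  rw [← finsum_eq_sum_of_fintype, ← Set.ncard_iUnion_of_finite (fun _ => Set.toFinite _) hs,
    ← Nat.card_eq_fintype_card]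
  exact Set.ncard_le_card _

namespace SimpleGraph

variable {V : Type*}

theorem degN_eq_degree (H : SimpleGraph V) (v : V) [Fintype (H.neighborSet v)] :
    degN H v = H.degree v := by
  rw [degN, Set.ncard_eq_toFinset_card', ← card_neighborFinset_eq_degree, neighborFinset]

theorem sum_degN_le_of_pairwise_disjoint {ι : Type*} [Fintype ι] [Finite V] {G : SimpleGraph V}
    {T : ι → SimpleGraph V} (hle : ∀ j, T j ≤ G)
    (hdisj : Pairwise fun j k => Disjoint (T j).edgeSet (T k).edgeSet) (v : V) :
    ∑ j, degN (T j) v ≤ degN G v := by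
  have hnbr : Pairwise (Disjoint on fun j => (T j).neighborSet v) :=
    fun j k hjk => Set.disjoint_left.mpr fun w hj hk =>
      Set.disjoint_left.mp (hdisj hjk) ((T j).mem_edgeSet.mpr hj) ((T k).mem_edgeSet.mpr hk)
  simp only [degN]
  rw [← finsum_eq_sum_of_fintype, ← Set.ncard_iUnion_of_finite (fun _ => Set.toFinite _) hnbr]
  exact Set.ncard_le_ncard (Set.iUnion_subset fun j w hw => hle j hw)

theorem Connected.one_le_degN [Finite V] [Nontrivial V] {T : SimpleGraph V} (hT : T.Connected)
    (v : V) : 1 ≤ degN T v := by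
  obtain ⟨w, hw⟩ := hT.preconnected.exists_adj_of_nontrivial v
  exact (Set.ncard_pos (Set.toFinite _)).mpr ⟨w, hw⟩

theorem IsTree.sum_degN [Fintype V] {T : SimpleGraph V} (hT : T.IsTree) :
    ∑ v, degN T v = 2 * (Fintype.card V - 1) := by
  classical
  simp only [degN_eq_degree, sum_degrees_eq_twice_card_edges, ← hT.card_edgeFinset,
    Nat.add_sub_cancel]

theorem ncard_inn_eq_card_filter [Fintype V] (T : SimpleGraph V) :
    (inn T).ncard = #{v | 2 ≤ degN T v} := by
  classical
  rw [Set.ncard_eq_toFinset_card', inn, Set.toFinset_ofPred]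

theorem IsTree.card_sub_two_le_ncard_inn_mul [Fintype V] {T : SimpleGraph V} (hT : T.IsTree)
    {Δ : ℕ} (hΔ : ∀ v, degN T v ≤ Δ + 1) : Fintype.card V - 2 ≤ (inn T).ncard * Δ := by
  classical
  have hinner : ∑ v with 2 ≤ degN T v, degN T v ≤ #{v | 2 ≤ degN T v} * (Δ + 1) := by
    simpa using sum_le_card_nsmul _ _ _ fun v _ => hΔ v
  have hleaves : ∑ v with ¬2 ≤ degN T v, degN T v ≤ #{v | ¬2 ≤ degN T v} := by
    simpa using sum_le_card_nsmul _ (degN T) 1 fun v hv => by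
      simp only [mem_filter] at hv; omega
  have hsplit := sum_filter_add_sum_filter_not univ (2 ≤ degN T ·) (degN T)
  have hcard := card_filter_add_card_filter_not (s := univ) (2 ≤ degN T ·)
  rw [hT.sum_degN] at hsplit
  rw [card_univ] at hcard
  rw [mul_add_one] at hinner
  rw [ncard_inn_eq_card_filter]
  omega

end SimpleGraph

namespace AreCISTs

variable {V : Type*} {r : ℕ} {G : SimpleGraph V} {T : Fin r → SimpleGraph V}

theorem degN_add_le [Finite V] [Nontrivial V] (hT : AreCISTs G T) (i : Fin r) (v : V) :
    degN (T i) v + (r - 1) ≤ degN G v := by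
  have hsum := Finset.add_card_sub_one_mul_le_sum
    (fun j => (hT.1 j).2.connected.one_le_degN v) i
  rw [Fintype.card_fin, mul_one] at hsum
  exact hsum.trans (sum_degN_le_of_pairwise_disjoint (fun j => (hT.1 j).1) hT.2.1 v)

theorem sum_ncard_inn_le [Fintype V] (hT : AreCISTs G T) :
    ∑ i, (inn (T i)).ncard ≤ Fintype.card V :=
  Set.sum_ncard_le_card fun i j hij =>
    Set.disjoint_left.mpr fun v hi hj => hij (hT.2.2 v i j hi hj)

end AreCISTs

theorem stmt_2_general {V : Type*} [Fintype V] (r : ℕ)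
    (G : SimpleGraph V) (hreg : IsRegularDeg G (2 * r))
    (T : Fin r → SimpleGraph V) (hT : AreCISTs G T) :
    ∀ i : Fin r,
      (Fintype.card V - 2 + r - 1) / r ≤ (inn (T i)).ncard ∧
      (inn (T i)).ncard ≤ Fintype.card V - ((Fintype.card V - 2 + r - 1) / r) * (r - 1) := by
  intro i
  have : Nontrivial V := by
    obtain ⟨v⟩ := (hT.1 i).2.connected.nonempty
    obtain ⟨w, hw⟩ := Set.nonempty_of_ncard_ne_zero (s := G.neighborSet v)
      (by rw [← degN, hreg v]; have := i.pos; omega)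
    exact ⟨v, w, G.ne_of_adj hw⟩
  have hdeg (j : Fin r) (v : V) : degN (T j) v ≤ r + 1 := by
    have := hT.degN_add_le j v
    rw [hreg v] at this
    omega
  have hlow (j : Fin r) : (Fintype.card V - 2 + r - 1) / r ≤ (inn (T j)).ncard := by
    have := (hT.1 j).2.card_sub_two_le_ncard_inn_mul (hdeg j)
    rw [Nat.div_le_iff_le_mul_add_pred i.pos, mul_comm]
    omega
  refine ⟨hlow i, ?_⟩
  have hothers := Finset.add_card_sub_one_mul_le_sum hlow i
  rw [Fintype.card_fin, mul_comm] at hothers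
  have hall := hT.sum_ncard_inn_le
  omega

/-- If `G` is a `2r`-regular graph of order `n` (`r ≥ 2`) admitting `r` completely
independent spanning trees `T_1, …, T_r`, then for every `i`,
`⌈(n−2)/r⌉ ≤ |inn(T_i)| ≤ n − ⌈(n−2)/r⌉·(r−1)`.
(For naturals, `⌈a/b⌉ = (a + b - 1) / b`.) -/
theorem stmt_2 {V : Type*} [Fintype V] (r : ℕ) (hr : 2 ≤ r)
    (G : SimpleGraph V) (hreg : IsRegularDeg G (2 * r))
    (T : Fin r → SimpleGraph V) (hT : AreCISTs G T) :
    ∀ i : Fin r,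
      (Fintype.card V - 2 + r - 1) / r ≤ (inn (T i)).ncard ∧
      (inn (T i)).ncard ≤ Fintype.card V - ((Fintype.card V - 2 + r - 1) / r) * (r - 1) :=
  stmt_2_general r G hreg T hT
end

section
/- Let r ≥ 2 and let G be a 2r-regular graph of order n in which there exist r completely independent spanning trees T_1, …, T_r. Then the sum over i = 1, …, r of |E^l_{T_i}| is at most |E^l| = r, where E^l_{T_i} is the set of edges uv of G with both endpoints inner vertices of T_i and uv not an edge of T_i, and E^l is the set of edges of G lying in none of the T_i. -/
open SimpleGraph

/-!
By the handshake lemma `G` has `n r` edges, and the `r` edge-disjoint spanning trees use `r (n - 1)` of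
them, so exactly `r` edges are lost. An edge `uv` of `E^l_{T_i}` has both ends inner in `T_i`; since
`u` has a `T_i`-neighbour other than `v`, the tree `T_j` containing `uv` (if any) spans at least
three vertices, so one of `u, v` is inner in `T_j`, forcing `j = i`, which is impossible as
`uv ∉ T_i`. Hence each `E^l_{T_i}` consists of lost edges, and these sets are pairwise disjoint
because a vertex is inner in at most one tree.
-/

namespace SimpleGraph

variable {V : Type*} {T : SimpleGraph V}

lemma exists_adj_ne_of_two_le_degN {u : V} (h : 2 ≤ degN T u) (v : V) :
    ∃ w, T.Adj u w ∧ w ≠ v := by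
  by_contra! hne
  have hsub : T.neighborSet u ⊆ {v} := fun w hw => hne w hw
  have : degN T u ≤ 1 := (Set.ncard_le_ncard hsub).trans_eq (Set.ncard_singleton v)
  omega

lemma neighborSet_eq_singleton_of_degN_lt_two [Finite V] {u v : V} (huv : T.Adj u v)
    (h : degN T u < 2) : T.neighborSet u = {v} :=
  (Set.ncard_le_one_iff_subsingleton.mp (Nat.le_of_lt_succ h)).eq_singleton_of_mem huv

/-- In a connected graph on at least three vertices, no edge joins two leaves. -/
lemma Connected.two_le_degN_or_of_adj [Finite V] (hT : T.Connected) {u v w : V} (huv : T.Adj u v)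
    (hwu : w ≠ u) (hwv : w ≠ v) : 2 ≤ degN T u ∨ 2 ≤ degN T v := by
  by_contra! h
  have hu := neighborSet_eq_singleton_of_degN_lt_two huv h.1
  have hv := neighborSet_eq_singleton_of_degN_lt_two huv.symm h.2
  obtain ⟨d, -, hfst, hsnd⟩ :=
    (hT.preconnected u w).some.exists_boundary_dart {u, v} (by simp) (by simp [hwu, hwv])
  have hadj : d.snd ∈ T.neighborSet d.fst := d.adj
  rcases hfst with hfst | hfst <;> rw [hfst] at hadj <;> simp_all

lemma degN_eq_degree_s4 [Fintype V] [DecidableRel T.Adj] (v : V) : degN T v = T.degree v := by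
  rw [degN, Set.ncard_eq_toFinset_card', Set.toFinset_card, card_neighborSet_eq_degree]

lemma two_mul_ncard_edgeSet_of_isRegularDeg [Fintype V] {d : ℕ} (h : IsRegularDeg T d) :
    2 * T.edgeSet.ncard = Fintype.card V * d := by
  classical
  rw [← coe_edgeFinset, Set.ncard_coe_finset, ← sum_degrees_eq_twice_card_edges]
  simp only [← degN_eq_degree_s4, show ∀ v, degN T v = d from h, Finset.sum_const,
    Finset.card_univ, smul_eq_mul]

lemma IsTree.ncard_edgeSet_add_one [Fintype V] (hT : T.IsTree) :
    T.edgeSet.ncard + 1 = Fintype.card V := by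
  classical
  rw [← coe_edgeFinset, Set.ncard_coe_finset]
  exact hT.card_edgeFinset

end SimpleGraph

namespace AreCISTs

variable {V : Type*} {r : ℕ} {G : SimpleGraph V} {T : Fin r → SimpleGraph V}

lemma eq_of_mem_inn (hT : AreCISTs G T) {v : V} {i j : Fin r} (hi : v ∈ inn (T i))
    (hj : v ∈ inn (T j)) : i = j :=
  hT.2.2 v i j hi hj

lemma lostAt_subset_lostEdges [Finite V] (hT : AreCISTs G T) (i : Fin r) :
    lostAt G (T i) ⊆ lostEdges G T := by
  intro e ⟨heG, hinn, heT⟩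
  refine ⟨heG, fun heU => ?_⟩
  obtain ⟨j, hej⟩ := Set.mem_iUnion.mp heU
  induction e using Sym2.ind with
  | _ u v =>
    have hu : u ∈ inn (T i) := hinn u (Sym2.mem_mk_left u v)
    have hv : v ∈ inn (T i) := hinn v (Sym2.mem_mk_right u v)
    obtain ⟨w, huw, hwv⟩ := exists_adj_ne_of_two_le_degN hu v
    have hji : j = i := by
      rcases (hT.1 j).2.connected.two_le_degN_or_of_adj hej huw.ne.symm hwv with h | h
      · exact hT.eq_of_mem_inn h hu
      · exact hT.eq_of_mem_inn h hv
    exact heT (hji ▸ hej)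

lemma pairwise_disjoint_lostAt (hT : AreCISTs G T) :
    Pairwise fun i j => Disjoint (lostAt G (T i)) (lostAt G (T j)) := by
  intro i j hij
  refine Set.disjoint_left.mpr fun e ⟨_, hi, _⟩ ⟨_, hj, _⟩ => ?_
  induction e using Sym2.ind with
  | _ u v =>
    exact hij (hT.eq_of_mem_inn (hi u (Sym2.mem_mk_left u v)) (hj u (Sym2.mem_mk_left u v)))

lemma sum_ncard_lostAt_le [Finite V] (hT : AreCISTs G T) :
    ∑ i, (lostAt G (T i)).ncard ≤ (lostEdges G T).ncard := by
  rw [← finsum_eq_sum_of_fintype,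
    ← Set.ncard_iUnion_of_finite (fun _ => Set.toFinite _) hT.pairwise_disjoint_lostAt]
  exact Set.ncard_le_ncard (Set.iUnion_subset hT.lostAt_subset_lostEdges)

lemma ncard_iUnion_edgeSet_add [Fintype V] (hT : AreCISTs G T) :
    (⋃ i, (T i).edgeSet).ncard + r = r * Fintype.card V := by
  rw [Set.ncard_iUnion_of_finite (fun _ => Set.toFinite _) hT.2.1,
    finsum_eq_sum_of_fintype]
  calc ∑ i, (T i).edgeSet.ncard + r = ∑ i, ((T i).edgeSet.ncard + 1) := by
        simp [Finset.sum_add_distrib]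
    _ = r * Fintype.card V := by simp [fun i => (hT.1 i).2.ncard_edgeSet_add_one]

lemma ncard_lostEdges [Fintype V] (hT : AreCISTs G T) (hreg : IsRegularDeg G (2 * r)) :
    (lostEdges G T).ncard = r := by
  have hsplit := Set.ncard_sdiff_add_ncard_of_subset
    (Set.iUnion_subset fun i => edgeSet_mono (hT.1 i).1 : ⋃ i, (T i).edgeSet ⊆ G.edgeSet)
  have hG := two_mul_ncard_edgeSet_of_isRegularDeg hreg
  have hU := hT.ncard_iUnion_edgeSet_add
  rw [lostEdges]
  linarith

end AreCISTs

theorem stmt_4_general {V : Type*} [Fintype V] (r : ℕ)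
    (G : SimpleGraph V) (hreg : IsRegularDeg G (2 * r))
    (T : Fin r → SimpleGraph V) (hT : AreCISTs G T) :
    (∑ i : Fin r, (lostAt G (T i)).ncard) ≤ (lostEdges G T).ncard ∧
    (lostEdges G T).ncard = r :=
  ⟨hT.sum_ncard_lostAt_le, hT.ncard_lostEdges hreg⟩

/-- If `G` is a `2r`-regular graph (`r ≥ 2`) admitting `r` completely independent
spanning trees `T_1, …, T_r`, then `∑ i, |E^l_{T_i}| ≤ |E^l| = r`. -/
theorem stmt_4 {V : Type*} [Fintype V] (r : ℕ) (hr : 2 ≤ r)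
    (G : SimpleGraph V) (hreg : IsRegularDeg G (2 * r))
    (T : Fin r → SimpleGraph V) (hT : AreCISTs G T) :
    (∑ i : Fin r, (lostAt G (T i)).ncard) ≤ (lostEdges G T).ncard ∧
    (lostEdges G T).ncard = r :=
  stmt_4_general r G hreg T hT
end

section
/- Let r ≥ 2 and let G be a 2r-regular graph of order n in which there exist r completely independent spanning trees T_1, …, T_r. Then there exists a spanning tree T among them such that ped(T) ≤ 2 and |E^l_T| ≤ 1; moreover, if r does not divide n, then ped(T) < 2 and |E^l_T| < 1 (i.e., ped(T) ≤ 1 and E^l_T = ∅). -/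
open SimpleGraph

/-!
Let `ℓ v` be the number of edges of `G` at `v` lying in none of the trees. Since `G` has degree
sum `2rn` and each tree `2(n - 1)`, `∑ ℓ = 2r`. An inner vertex of `T i` is a leaf of every other
tree, so `deg_{T i} v + ℓ v = r + 1` on `inn (T i)`; as a tree has degree sum `n - 2 + |inn T|` on
its inner vertices, this gives `|inn (T i)| r = n - 2 + L i` with `L i = ∑_{v ∈ inn (T i)} ℓ v`,
that is `ped (T i) = L i`. The sets `inn (T i)` are disjoint, so `∑ L i ≤ 2r` and some `L i ≤ 2`.
An edge of `E^l_{T i}` would join two leaves of each other tree, impossible in a tree on at least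
three vertices, so it is lost and is counted at both ends in `L i`. Finally `L i = 2` forces
`r ∣ n`.
-/

open Finset Function

section

variable {V : Type*}

lemma AreCISTs.pairwise_disjoint {r : ℕ} {G : SimpleGraph V} {T : Fin r → SimpleGraph V}
    (hT : AreCISTs G T) : Pairwise (Disjoint on T) :=
  fun i j hij => disjoint_edgeSet.mp (hT.2.1 i j hij)

variable [Fintype V]

lemma degN_eq_degree (H : SimpleGraph V) [DecidableRel H.Adj] (v : V) :
    degN H v = H.degree v := by
  rw [degN, Set.ncard_eq_toFinset_card', Set.toFinset_card, card_neighborSet_eq_degree]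

lemma degN_mono {H H' : SimpleGraph V} (h : H ≤ H') (v : V) : degN H v ≤ degN H' v :=
  Set.ncard_le_ncard fun _ hw => h hw

lemma sum_degN_eq_two_mul_ncard_edgeSet (H : SimpleGraph V) :
    ∑ v, degN H v = 2 * H.edgeSet.ncard := by
  classical
  simp_rw [degN_eq_degree, sum_degrees_eq_twice_card_edges, ← coe_edgeFinset, Set.ncard_coe_finset]

lemma degN_sdiff_iSup_add_sum_degN {ι : Type*} [Fintype ι] {G : SimpleGraph V}
    {T : ι → SimpleGraph V} (hle : ∀ j, T j ≤ G) (hdisj : Pairwise (Disjoint on T)) (v : V) :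
    degN (G \ ⨆ j, T j) v + ∑ j, degN (T j) v = degN G v := by
  have hsub : (⨆ j, T j).neighborSet v ⊆ G.neighborSet v := fun _ hw => iSup_le hle hw
  have hunion : ((⨆ j, T j).neighborSet v).ncard = ∑ j, degN (T j) v := by
    rw [neighborSet_iSup, Set.ncard_iUnion_of_finite (fun _ => Set.toFinite _)
      fun i j hij => disjoint_neighborSet.mpr (hdisj hij) v, finsum_eq_sum_of_fintype]
    rfl
  rw [degN, degN, neighborSet_sdiff, ← hunion, Set.ncard_sdiff_add_ncard_of_subset hsub]

noncomputable def innFinset (T : SimpleGraph V) : Finset V := {v | 2 ≤ degN T v}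

@[simp]
lemma mem_innFinset {T : SimpleGraph V} {v : V} : v ∈ innFinset T ↔ 2 ≤ degN T v := by
  simp [innFinset]

lemma ncard_inn (T : SimpleGraph V) : (inn T).ncard = #(innFinset T) := by
  rw [← Set.ncard_coe_finset]
  congr
  ext
  simp [inn]

namespace SimpleGraph

lemma Preconnected.one_le_degN [Nontrivial V] {H : SimpleGraph V} (hH : H.Preconnected)
    (v : V) : 1 ≤ degN H v := by
  classical
  rw [degN_eq_degree]
  exact hH.degree_pos_of_nontrivial v

lemma Connected.not_adj_of_degN_le_one {H : SimpleGraph V} (hH : H.Connected)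
    (hV : 3 ≤ Fintype.card V) {u w : V} (hu : degN H u ≤ 1) (hw : degN H w ≤ 1) :
    ¬ H.Adj u w := by
  classical
  intro huw
  obtain ⟨x, hx⟩ : ({u, w}ᶜ : Finset V).Nonempty := by
    rw [← card_pos, card_compl]
    have := card_le_two (a := u) (b := w)
    omega
  obtain ⟨p⟩ := hH.preconnected u x
  -- a walk leaving `{u, w}` needs an edge out of `u` or `w`, whose only neighbours are each other
  obtain ⟨d, -, hd, hd'⟩ := p.exists_boundary_dart {u, w} (by simp) (by simpa using hx)
  rcases hd with hd | hd
  · exact hd' (.inr ((Set.ncard_le_one (Set.toFinite _)).mp hu _ (hd ▸ d.adj) _ huw))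
  · exact hd' (.inl ((Set.ncard_le_one (Set.toFinite _)).mp hw _ (hd ▸ d.adj) _ huw.symm))

lemma IsTree.sum_degN_add_two {T : SimpleGraph V} (hT : T.IsTree) :
    ∑ v, degN T v + 2 = 2 * Fintype.card V := by
  classical
  rw [sum_degN_eq_two_mul_ncard_edgeSet, ← coe_edgeFinset, Set.ncard_coe_finset,
    ← hT.card_edgeFinset]
  ring

lemma IsTree.sum_innFinset_degN_add_two [Nontrivial V] {T : SimpleGraph V} (hT : T.IsTree) :
    ∑ v ∈ innFinset T, degN T v + 2 = Fintype.card V + #(innFinset T) := by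
  classical
  have hleaf : ∀ v ∈ (innFinset T)ᶜ, degN T v = 1 := fun v hv => by
    have := hT.connected.preconnected.one_le_degN v
    simp only [mem_compl, mem_innFinset] at hv
    omega
  have hsum := hT.sum_degN_add_two
  rw [← sum_add_sum_compl (innFinset T), sum_congr rfl hleaf, sum_const, card_compl,
    smul_eq_mul, mul_one] at hsum
  have := card_le_univ (innFinset T)
  omega

end SimpleGraph

/-- The `L i` of the proof: `G \ ⨆ j, T j` is the graph of `lostEdges G T`. -/
noncomputable def innerLostDeg {r : ℕ} (G : SimpleGraph V) (T : Fin r → SimpleGraph V)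
    (i : Fin r) : ℕ :=
  ∑ v ∈ innFinset (T i), degN (G \ ⨆ j, T j) v

namespace AreCISTs

variable {r : ℕ} {G : SimpleGraph V} {T : Fin r → SimpleGraph V}

lemma disjoint_innFinset (hT : AreCISTs G T) {i j : Fin r} (hij : i ≠ j) :
    Disjoint (innFinset (T i)) (innFinset (T j)) :=
  disjoint_left.mpr fun v hi hj =>
    hij (hT.2.2 v i j (mem_innFinset.mp hi) (mem_innFinset.mp hj))

lemma degN_le_one_of_mem_innFinset (hT : AreCISTs G T) {i j : Fin r} {v : V}
    (hv : v ∈ innFinset (T i)) (hji : j ≠ i) : degN (T j) v ≤ 1 := by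
  by_contra! h
  exact hji (hT.2.2 v j i h (mem_innFinset.mp hv))

lemma not_adj_of_mem_innFinset (hT : AreCISTs G T) (hV : 3 ≤ Fintype.card V) {i j : Fin r}
    (hji : j ≠ i) {u w : V} (hu : u ∈ innFinset (T i)) (hw : w ∈ innFinset (T i)) :
    ¬ (T j).Adj u w :=
  (hT.1 j).2.connected.not_adj_of_degN_le_one hV
    (hT.degN_le_one_of_mem_innFinset hu hji) (hT.degN_le_one_of_mem_innFinset hw hji)

lemma sum_degN_of_mem_innFinset [Nontrivial V] (hT : AreCISTs G T) {i : Fin r} {v : V}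
    (hv : v ∈ innFinset (T i)) : ∑ j, degN (T j) v = degN (T i) v + (r - 1) := by
  classical
  have hleaf : ∀ j ∈ ({i}ᶜ : Finset (Fin r)), degN (T j) v = 1 := fun j hj => by
    have := (hT.1 j).2.connected.preconnected.one_le_degN v
    have := hT.degN_le_one_of_mem_innFinset hv (by simpa using hj)
    omega
  rw [Fintype.sum_eq_add_sum_compl i, sum_congr rfl hleaf, sum_const, card_compl, card_singleton,
    Fintype.card_fin, smul_eq_mul, mul_one]

lemma card_innFinset_mul_add_two [Nontrivial V] (hT : AreCISTs G T)
    (hreg : IsRegularDeg G (2 * r)) (i : Fin r) :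
    #(innFinset (T i)) * r + 2 = Fintype.card V + innerLostDeg G T i := by
  have hvertex : ∀ v ∈ innFinset (T i), degN (T i) v + degN (G \ ⨆ j, T j) v = r + 1 :=
    fun v hv => by
      have := degN_sdiff_iSup_add_sum_degN (fun j => (hT.1 j).1) hT.pairwise_disjoint v
      rw [hT.sum_degN_of_mem_innFinset hv, hreg v] at this
      have := i.pos
      omega
  have hsum := sum_congr rfl hvertex
  rw [sum_add_distrib, sum_const, smul_eq_mul] at hsum
  have := (hT.1 i).2.sum_innFinset_degN_add_two
  rw [innerLostDeg]
  linarith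

lemma sum_degN_sdiff_iSup (hT : AreCISTs G T) (hreg : IsRegularDeg G (2 * r)) :
    ∑ v, degN (G \ ⨆ j, T j) v = 2 * r := by
  have hvertex := sum_congr rfl fun v (_ : v ∈ univ) =>
    degN_sdiff_iSup_add_sum_degN (fun j => (hT.1 j).1) hT.pairwise_disjoint v
  have htrees := sum_congr rfl fun j (_ : j ∈ univ) => (hT.1 j).2.sum_degN_add_two
  have hG : ∑ v, degN G v = Fintype.card V * (2 * r) := by
    rw [sum_congr rfl fun v _ => hreg v, sum_const, card_univ, smul_eq_mul]
  simp only [sum_add_distrib, sum_const, card_univ, smul_eq_mul, Fintype.card_fin]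
    at hvertex htrees
  rw [sum_comm] at hvertex
  linarith

lemma sum_innerLostDeg_le (hT : AreCISTs G T) (hreg : IsRegularDeg G (2 * r)) :
    ∑ i, innerLostDeg G T i ≤ 2 * r := by
  classical
  rw [← hT.sum_degN_sdiff_iSup hreg]
  unfold innerLostDeg
  rw [← sum_biUnion fun i _ j _ hij => hT.disjoint_innFinset hij]
  exact sum_le_sum_of_subset (subset_univ _)

lemma two_mul_ncard_lostAt_le (hT : AreCISTs G T) (hV : 3 ≤ Fintype.card V) (i : Fin r) :
    2 * (lostAt G (T i)).ncard ≤ innerLostDeg G T i := by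
  set H := fromEdgeSet (lostAt G (T i))
  have hedges : H.edgeSet = lostAt G (T i) := by
    rw [edgeSet_fromEdgeSet, sdiff_eq_left, Set.disjoint_left]
    exact fun e he => G.not_isDiag_of_mem_edgeSet he.1
  have hinn : ∀ {u w}, H.Adj u w → u ∈ innFinset (T i) ∧ w ∈ innFinset (T i) := fun huw =>
    have h := ((fromEdgeSet_adj _).mp huw).1.2.1
    ⟨mem_innFinset.mpr (h _ (Sym2.mem_mk_left _ _)),
      mem_innFinset.mpr (h _ (Sym2.mem_mk_right _ _))⟩
  have hle : H ≤ G \ ⨆ j, T j := fun u w huw => by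
    obtain ⟨⟨hG, -, hTi⟩, -⟩ := (fromEdgeSet_adj _).mp huw
    refine ⟨hG, fun hT' => ?_⟩
    obtain ⟨j, hj⟩ := iSup_adj.mp hT'
    by_cases hji : j = i
    · exact hTi (hji ▸ hj)
    · exact hT.not_adj_of_mem_innFinset hV hji (hinn huw).1 (hinn huw).2 hj
  calc 2 * (lostAt G (T i)).ncard = ∑ v, degN H v := by
        rw [sum_degN_eq_two_mul_ncard_edgeSet, hedges]
    _ = ∑ v ∈ innFinset (T i), degN H v := by
        refine (sum_subset (subset_univ _) fun v _ hv => ?_).symm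
        rw [degN, Set.ncard_eq_zero]
        exact Set.eq_empty_of_forall_notMem fun w hw => hv (hinn hw).1
    _ ≤ innerLostDeg G T i := sum_le_sum fun v _ => degN_mono hle v

end AreCISTs

end

/-- If `G` is a `2r`-regular graph of order `n` (`r ≥ 2`) admitting `r` completely
independent spanning trees, then one of them, `T`, satisfies `ped(T) ≤ 2` and
`|E^l_T| ≤ 1`, with strict inequalities (i.e. `ped(T) < 2` and `E^l_T = ∅`) if
`r` does not divide `n`. -/
theorem stmt_5 {V : Type*} [Fintype V] (r : ℕ) (hr : 2 ≤ r)
    (G : SimpleGraph V) (hreg : IsRegularDeg G (2 * r))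
    (T : Fin r → SimpleGraph V) (hT : AreCISTs G T) :
    ∃ i : Fin r,
      ped (Fintype.card V) r (T i) ≤ 2 ∧ (lostAt G (T i)).ncard ≤ 1 ∧
      (¬ (r ∣ Fintype.card V) →
        ped (Fintype.card V) r (T i) < 2 ∧ lostAt G (T i) = ∅) := by
  have : NeZero r := ⟨by omega⟩
  rcases isEmpty_or_nonempty V with hV | ⟨⟨v₀⟩⟩
  · refine ⟨0, ?_, ?_, fun hndvd => by simp at hndvd⟩
    · simp [ped, Set.eq_empty_of_isEmpty]
    · simp [Set.eq_empty_of_isEmpty]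
  have hcard : 2 * r + 1 ≤ Fintype.card V := by
    classical
    have := G.degree_lt_card_verts v₀
    rw [← degN_eq_degree, hreg v₀] at this
    omega
  have : Nontrivial V := Fintype.one_lt_card_iff_nontrivial.mp (by omega)
  obtain ⟨i, -, hLi⟩ : ∃ i ∈ univ, innerLostDeg G T i ≤ 2 :=
    exists_le_of_sum_le univ_nonempty <| by simpa [mul_comm] using hT.sum_innerLostDeg_le hreg
  have hmul := hT.card_innFinset_mul_add_two hreg i
  have hped : ped (Fintype.card V) r (T i) = innerLostDeg G T i := by
    rw [ped, ncard_inn]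
    linarith [congrArg (Nat.cast : ℕ → ℤ) hmul]
  have hlost := hT.two_mul_ncard_lostAt_le (by omega) i
  refine ⟨i, by omega, by omega, fun hndvd => ?_⟩
  have hL : innerLostDeg G T i ≠ 2 := fun h => hndvd ⟨#(innFinset (T i)), by rw [mul_comm]; omega⟩
  exact ⟨by omega, (Set.ncard_eq_zero (Set.toFinite _)).mp (by omega)⟩
end

section
/- For all integers n ≥ 2 and r ≥ 2, there exist r completely independent spanning trees in the Cartesian product K_{2r} □ P_n of the complete graph on 2r vertices and the path on n vertices. -/
open SimpleGraph

/-!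
Tree `i` lives on the pair of rows `2i, 2i+1` of `K_{2r} □ P_n`: row `2i` is a path rooted at
`(2i, 0)`, every vertex of row `2i+1` hangs off its neighbour in row `2i`, and every vertex of
any other row is a leaf attached to a row of pair `i` in the same layer. So the inner vertices of
the trees are pairwise disjoint. A horizontal edge between pairs `i < k` lies in tree `i` only if
its two ends have equal parity and in tree `k` only if they have different parity, so the trees
are also edge-disjoint. Each tree is given by a parent function decreasing a height, which makes
it a spanning tree.
-/

namespace SimpleGraph

variable {V : Type*} {p : V → V} {h : V → ℕ} {ρ u v w : V}

def parentGraph (p : V → V) : SimpleGraph V := fromRel fun u v => p u = v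

lemma parentGraph_adj : (parentGraph p).Adj u v ↔ u ≠ v ∧ (p u = v ∨ p v = u) := by
  simp [parentGraph]

lemma parentGraph_adj_parent (hv : p v ≠ v) : (parentGraph p).Adj v (p v) :=
  parentGraph_adj.2 ⟨hv.symm, .inl rfl⟩

lemma parentGraph_le_iff {G : SimpleGraph V} :
    parentGraph p ≤ G ↔ ∀ v, p v ≠ v → G.Adj v (p v) := by
  refine ⟨fun hle v hv => hle (parentGraph_adj_parent hv), fun hG u v huv => ?_⟩
  obtain ⟨hne, rfl | rfl⟩ := parentGraph_adj.1 huv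
  · exact hG u hne.symm
  · exact (hG v hne).symm

lemma mem_edgeSet_parentGraph {e : Sym2 V} :
    e ∈ (parentGraph p).edgeSet ↔ ∃ v, p v ≠ v ∧ s(v, p v) = e := by
  induction e with
  | _ a b =>
    rw [mem_edgeSet, parentGraph_adj]
    constructor
    · rintro ⟨hne, rfl | rfl⟩
      exacts [⟨a, hne.symm, rfl⟩, ⟨b, hne, Sym2.eq_swap⟩]
    · rintro ⟨v, hv, hvab⟩
      rcases Sym2.eq_iff.1 hvab with ⟨rfl, rfl⟩ | ⟨rfl, rfl⟩
      exacts [⟨hv.symm, .inl rfl⟩, ⟨hv, .inr rfl⟩]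

lemma degN_parentGraph_le_one (hv : v ∉ Set.range p) : degN (parentGraph p) v ≤ 1 := by
  have hsub : (parentGraph p).neighborSet v ⊆ {p v} := fun u hu => by
    obtain ⟨-, rfl | rfl⟩ := parentGraph_adj.1 hu
    · rfl
    · exact absurd ⟨u, rfl⟩ hv
  simpa [degN] using Set.ncard_le_ncard hsub

lemma eq_parent_of_adj_of_le (hlt : ∀ v, p v ≠ v → h (p v) < h v)
    (hadj : (parentGraph p).Adj u w) (hw : h w ≤ h u) : w = p u := by
  obtain ⟨hne, rfl | rfl⟩ := parentGraph_adj.1 hadj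
  · rfl
  · exact absurd (hlt w hne) hw.not_gt

/-- In a cycle, both cycle-neighbours of a vertex of maximal height would be its parent. -/
lemma parentGraph_isAcyclic (hlt : ∀ v, p v ≠ v → h (p v) < h v) :
    (parentGraph p).IsAcyclic := by
  classical
  intro v c hc
  obtain ⟨u, hu, hmax⟩ := c.support.toFinset.exists_max_image h ⟨v, by simp⟩
  rw [List.mem_toFinset] at hu
  have hc' := hc.rotate hu
  have hle : ∀ w ∈ (c.rotate u hu).support, h w ≤ h u := fun w hw =>
    hmax w (List.mem_toFinset.2 ((Walk.mem_support_rotate_iff ..).1 hw))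
  have hnil := hc'.not_nil
  refine hc'.snd_ne_penultimate ?_
  rw [eq_parent_of_adj_of_le hlt (Walk.adj_snd hnil) (hle _ (Walk.getVert_mem_support ..)),
    eq_parent_of_adj_of_le hlt (Walk.adj_penultimate hnil).symm
      (hle _ (Walk.getVert_mem_support ..))]

lemma parentGraph_reachable_root (hlt : ∀ v, v ≠ ρ → h (p v) < h v) (v : V) :
    (parentGraph p).Reachable v ρ := by
  induction hv : h v using Nat.strong_induction_on generalizing v with
  | _ m ih =>
    by_cases hvρ : v = ρ
    · exact hvρ ▸ .rfl
    have hpv : p v ≠ v := fun e => by simpa [e] using hlt v hvρ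
    exact (parentGraph_adj_parent hpv).reachable.trans (ih _ (hv ▸ hlt v hvρ) _ rfl)

lemma parentGraph_isTree (hρ : p ρ = ρ) (hlt : ∀ v, v ≠ ρ → h (p v) < h v) :
    (parentGraph p).IsTree where
  connected :=
    have : Nonempty V := ⟨ρ⟩
    (connected_iff_exists_forall_reachable _).2
      ⟨ρ, fun v => (parentGraph_reachable_root hlt v).symm⟩
  isAcyclic := parentGraph_isAcyclic fun v hv => hlt v fun hvρ => hv (hvρ ▸ hρ)

end SimpleGraph

open SimpleGraph

namespace CompleteBoxPath

variable {n r : ℕ}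

/-- The row of pair `i` to which tree `i` attaches the vertices of a row `a` outside pair `i`. -/
def attachRow (i : Fin r) (a : Fin (2 * r)) : Fin (2 * r) :=
  ⟨2 * i + if i.1 < a.1 / 2 then a.1 % 2 else 1 - a.1 % 2, by split_ifs <;> omega⟩

def treeParent (i : Fin r) (w : Fin (2 * r) × Fin n) : Fin (2 * r) × Fin n :=
  if w.1.1 / 2 = i then
    (⟨2 * i, by omega⟩, if w.1.1 % 2 = 1 then w.2 else ⟨w.2 - 1, by omega⟩)
  else (attachRow i w.1, w.2)

def treeRoot (hn : 0 < n) (i : Fin r) : Fin (2 * r) × Fin n := (⟨2 * i, by omega⟩, ⟨0, hn⟩)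

def treeHeight (i : Fin r) (w : Fin (2 * r) × Fin n) : ℕ :=
  3 * w.2 + if w.1.1 / 2 = i then w.1.1 % 2 else 2

lemma attachRow_val (i : Fin r) (a : Fin (2 * r)) :
    (attachRow i a).1 = 2 * i.1 + if i.1 < a.1 / 2 then a.1 % 2 else 1 - a.1 % 2 := rfl

lemma treeParent_fst_val (i : Fin r) (w : Fin (2 * r) × Fin n) :
    (treeParent i w).1.1 = if w.1.1 / 2 = i.1 then 2 * i.1 else (attachRow i w.1).1 := by
  unfold treeParent; split_ifs <;> rfl

lemma treeParent_snd_val (i : Fin r) (w : Fin (2 * r) × Fin n) :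
    (treeParent i w).2.1 = if w.1.1 / 2 = i.1 ∧ w.1.1 % 2 = 0 then w.2.1 - 1 else w.2.1 := by
  unfold treeParent; split_ifs <;> first | rfl | omega

lemma treeParent_fst_div_two (i : Fin r) (w : Fin (2 * r) × Fin n) :
    (treeParent i w).1.1 / 2 = i := by
  rw [treeParent_fst_val, attachRow_val]
  split_ifs <;> omega

lemma treeParent_treeRoot (hn : 0 < n) (i : Fin r) :
    treeParent i (treeRoot hn i) = treeRoot hn i := by
  simp [treeParent, treeRoot]

lemma treeHeight_treeParent_lt (hn : 0 < n) (i : Fin r) {w : Fin (2 * r) × Fin n}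
    (hw : w ≠ treeRoot hn i) : treeHeight i (treeParent i w) < treeHeight i w := by
  have hw' : w.2.1 = 0 → w.1.1 ≠ 2 * i := fun h0 hrow =>
    hw (Prod.ext (Fin.ext hrow) (Fin.ext h0))
  simp only [treeHeight, treeParent_fst_val, treeParent_snd_val, attachRow_val]
  split_ifs <;> omega

lemma adj_treeParent (i : Fin r) {w : Fin (2 * r) × Fin n} (hw : treeParent i w ≠ w) :
    ((⊤ : SimpleGraph (Fin (2 * r))) □ pathGraph n).Adj w (treeParent i w) := by
  rw [Ne, Prod.ext_iff, Fin.ext_iff, Fin.ext_iff] at hw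
  rw [boxProd_adj, top_adj, pathGraph_adj, Ne, Fin.ext_iff, Fin.ext_iff]
  simp only [treeParent_fst_val, treeParent_snd_val, attachRow_val] at hw ⊢
  split_ifs at hw ⊢ <;> omega

lemma disjoint_edgeSet_parentGraph_treeParent {i k : Fin r} (hik : i ≠ k) :
    Disjoint (parentGraph (treeParent (n := n) i)).edgeSet
      (parentGraph (treeParent k)).edgeSet := by
  rw [Set.disjoint_left]
  intro e hi hk
  obtain ⟨u, -, rfl⟩ := mem_edgeSet_parentGraph.1 hi
  obtain ⟨w, -, he⟩ := mem_edgeSet_parentGraph.1 hk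
  have hik' : i.1 ≠ k.1 := Fin.val_ne_of_ne hik
  rcases Sym2.eq_iff.1 he with ⟨rfl, hpar⟩ | ⟨rfl, hback⟩
  · exact hik' ((treeParent_fst_div_two i w).symm.trans (hpar ▸ treeParent_fst_div_two k w))
  · have hu : u.1.1 / 2 = k := hback ▸ treeParent_fst_div_two k _
    have hrow := congrArg (·.1.1) hback
    simp only [treeParent_fst_val, attachRow_val] at hrow
    split_ifs at hrow <;> omega

lemma div_two_eq_of_one_lt_degN {i : Fin r} {v : Fin (2 * r) × Fin n}
    (hv : 1 < degN (parentGraph (treeParent i)) v) : v.1.1 / 2 = i := by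
  by_contra hvi
  refine hv.not_ge (degN_parentGraph_le_one ?_)
  rintro ⟨u, rfl⟩
  exact hvi (treeParent_fst_div_two i u)

end CompleteBoxPath

open CompleteBoxPath

theorem stmt_8_general (n r : ℕ) (hn : 2 ≤ n) :
    ∃ T : Fin r → SimpleGraph (Fin (2 * r) × Fin n),
      AreCISTs ((⊤ : SimpleGraph (Fin (2 * r))) □ pathGraph n) T := by
  have hn₀ : 0 < n := by omega
  refine ⟨fun i => parentGraph (treeParent i), fun i => ⟨?_, ?_⟩,
    fun i k hik => disjoint_edgeSet_parentGraph_treeParent hik, fun v i k hi hk => ?_⟩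
  · exact parentGraph_le_iff.2 fun w hw => adj_treeParent i hw
  · exact parentGraph_isTree (treeParent_treeRoot hn₀ i) fun w hw =>
      treeHeight_treeParent_lt hn₀ i hw
  · exact Fin.ext ((div_two_eq_of_one_lt_degN hi).symm.trans (div_two_eq_of_one_lt_degN hk))

/-- For all `n ≥ 2` and `r ≥ 2`, there exist `r` completely independent spanning
trees in `K_{2r} □ P_n`. -/
theorem stmt_8 (n r : ℕ) (hn : 2 ≤ n) (hr : 2 ≤ r) :
    ∃ T : Fin r → SimpleGraph (Fin (2 * r) × Fin n),
      AreCISTs ((⊤ : SimpleGraph (Fin (2 * r))) □ pathGraph n) T :=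
  stmt_8_general n r hn
end

section
/- For every integer n ≥ 3 with n ≡ 0 (mod 3), there exist three completely independent spanning trees in the Cartesian product K_5 □ C_n of the complete graph on 5 vertices and the cycle on n vertices. -/
open SimpleGraph

/-!
A single spanning tree `T` of `K_5 □ C_n` is rotated by the automorphism
`φ : (r, j) ↦ (π r, j + 1)` with `π = (0 3 4)`. The inner vertices of `T` are row `0` together
with `(1, j)` for `j ≡ 0` and `(2, j)` for `j ≡ 1 (mod 3)`; rows `3` and `4` consist of leaves.
As `3 ∣ n`, this pattern is invariant under `j ↦ j + 3`, and `T`, `φ T`, `φ² T` have pairwise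
disjoint inner vertex sets: row `0`, `3`, `4` respectively, and in rows `1, 2` each tree takes
one of the three residues of the column. Edge-disjointness of `T` from `φ T` and `φ² T` is a
finite check on the row and the residue of the column, and by equivariance this settles all pairs.
-/

lemma Fin.val_add_one_cases {n : ℕ} [NeZero n] (j : Fin n) :
    (j + 1).val = j.val + 1 ∨ (j.val + 1 = n ∧ (j + 1).val = 0) := by
  have h : (j + 1).val = (j.val + 1) % n := by rw [Fin.val_add, Fin.val_one', Nat.add_mod_mod]
  rcases (show j.val + 1 ≤ n from j.isLt).lt_or_eq with hlt | heq
  · exact .inl (h.trans (Nat.mod_eq_of_lt hlt))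
  · exact .inr ⟨heq, by rw [h, heq, Nat.mod_self]⟩

lemma Fin.val_sub_one_cases {n : ℕ} [NeZero n] (j : Fin n) :
    (j - 1).val + 1 = j.val ∨ (j.val = 0 ∧ (j - 1).val + 1 = n) := by
  have h := Fin.val_add_one_cases (j - 1)
  rw [sub_add_cancel] at h
  omega

namespace SimpleGraph

def Iso.boxProd {α α' β β' : Type*} {G : SimpleGraph α} {G' : SimpleGraph α'}
    {H : SimpleGraph β} {H' : SimpleGraph β'} (f : G ≃g G') (g : H ≃g H') :
    (G □ H) ≃g (G' □ H') where
  toEquiv := f.toEquiv.prodCongr g.toEquiv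
  map_rel_iff' := by
    simp [boxProd_adj, f.map_adj_iff, g.map_adj_iff, f.injective.eq_iff, g.injective.eq_iff]

def cycleGraphAddRight {n : ℕ} [NeZero n] (k : Fin n) : cycleGraph n ≃g cycleGraph n where
  toEquiv := Equiv.addRight k
  map_rel_iff' := by simp [cycleGraph_adj']

lemma cycleGraph_adj_add_one {n : ℕ} [NeZero n] (hn : 2 ≤ n) (j : Fin n) :
    (cycleGraph n).Adj j (j + 1) := by
  rw [cycleGraph_adj', add_sub_cancel_left, Fin.val_one', Nat.mod_eq_of_lt hn]
  exact .inr rfl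

lemma cycleGraph_adj_sub_one {n : ℕ} [NeZero n] (hn : 2 ≤ n) (j : Fin n) :
    (cycleGraph n).Adj j (j - 1) := by
  simpa using (cycleGraph_adj_add_one hn (j - 1)).symm

section ParentTree

variable {V : Type*} (p : V → V) (root : V)

def parentTree : SimpleGraph V :=
  fromRel fun x y => x ≠ root ∧ p x = y

variable {p root}

lemma parentTree_adj {x y : V} :
    (parentTree p root).Adj x y ↔ x ≠ y ∧ (x ≠ root ∧ p x = y ∨ y ≠ root ∧ p y = x) :=
  fromRel_adj _ _ _

lemma parentTree_adj_parent {ρ : V → ℕ} (hρ : ∀ v ≠ root, ρ (p v) < ρ v) {v : V}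
    (hv : v ≠ root) : (parentTree p root).Adj v (p v) :=
  parentTree_adj.2 ⟨fun h => (hρ v hv).ne (congrArg ρ h.symm), .inl ⟨hv, rfl⟩⟩

lemma parentTree_reachable_root {ρ : V → ℕ} (hρ : ∀ v ≠ root, ρ (p v) < ρ v) (v : V) :
    (parentTree p root).Reachable v root := by
  by_cases hv : v = root
  · exact hv ▸ .rfl
  · exact (parentTree_adj_parent hρ hv).reachable.trans (parentTree_reachable_root hρ (p v))
termination_by ρ v
decreasing_by exact hρ v hv

lemma parentTree_le {G : SimpleGraph V} (hG : ∀ v ≠ root, G.Adj v (p v)) :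
    parentTree p root ≤ G := by
  intro x y h
  rcases (parentTree_adj.1 h).2 with ⟨hx, rfl⟩ | ⟨hy, rfl⟩
  exacts [hG x hx, (hG y hy).symm]

/-- Connected thanks to the rank, and acyclic because its edges are among the `|V| - 1` edges
`s(v, p v)`, `v ≠ root`, while a connected graph has at least `|V| - 1` edges. -/
lemma parentTree_isTree [Finite V] {ρ : V → ℕ} (hρ : ∀ v ≠ root, ρ (p v) < ρ v) :
    (parentTree p root).IsTree := by
  have hconn : (parentTree p root).Connected := by
    have : Nonempty V := ⟨root⟩
    exact (connected_iff _).2 ⟨fun u v => (parentTree_reachable_root hρ u).trans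
      (parentTree_reachable_root hρ v).symm, inferInstance⟩
  have hsurj : Function.Surjective fun v : {v // v ≠ root} =>
      (⟨s(v.1, p v.1), parentTree_adj_parent hρ v.2⟩ : (parentTree p root).edgeSet) := by
    rintro ⟨e, he⟩
    induction e with
    | h x y =>
      rw [mem_edgeSet] at he
      rcases (parentTree_adj.1 he).2 with ⟨hx, rfl⟩ | ⟨hy, rfl⟩
      · exact ⟨⟨x, hx⟩, rfl⟩
      · exact ⟨⟨y, hy⟩, Subtype.ext Sym2.eq_swap⟩
  have hcard : Nat.card {v // v ≠ root} + 1 = Nat.card V := by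
    rw [← Set.ncard_univ V, ← Set.ncard_sdiff_singleton_add_one (Set.mem_univ root),
      ← Nat.card_coe_set_eq]
    exact congrArg (· + 1) (Nat.card_congr (Equiv.subtypeEquivRight (by simp)))
  refine isTree_iff_connected_and_card.2
    ⟨hconn, le_antisymm ?_ hconn.card_vert_le_card_edgeSet_add_one⟩
  exact hcard ▸ Nat.add_le_add_right (Nat.card_le_card_of_surjective _ hsurj) 1

lemma inn_parentTree_subset {I : Set V} (hp : ∀ v ≠ root, p v ∈ I) :
    inn (parentTree p root) ⊆ I := by
  intro v hv
  by_contra hvI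
  have hsub : (parentTree p root).neighborSet v ⊆ {p v} := by
    intro y hy
    rcases (parentTree_adj.1 hy).2 with ⟨_, rfl⟩ | ⟨hyr, rfl⟩
    · rfl
    · exact absurd (hp y hyr) hvI
  have := Set.ncard_le_ncard hsub (Set.finite_singleton _)
  rw [Set.ncard_singleton] at this
  exact absurd hv (by simp only [inn, degN, Set.mem_ofPred_eq]; omega)

/-- `s(v, p v) = s(σ w, σ (p w))` forces either `p v = σ (p w)`, impossible by `hI`,
or `p (σ (p w)) = σ w`. -/
lemma disjoint_edgeSet_parentTree_map {I : Set V} (σ : V → V) (hp : ∀ v ≠ root, p v ∈ I)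
    (hI : ∀ v ∈ I, σ v ∉ I) (hcross : ∀ v ≠ root, p (σ (p v)) ≠ σ v) :
    Disjoint (parentTree p root).edgeSet ((parentTree p root).map σ).edgeSet := by
  rw [Set.disjoint_left]
  intro e he he'
  induction e with
  | h x y =>
    rw [mem_edgeSet] at he he'
    obtain ⟨-, a, b, hab, rfl, rfl⟩ := (map_adj' σ _ x y).1 he'
    obtain ⟨-, hxy⟩ := parentTree_adj.1 he
    rcases (parentTree_adj.1 hab).2 with ⟨ha, rfl⟩ | ⟨hb, rfl⟩ <;>
      rcases hxy with ⟨hx, hpx⟩ | ⟨hy, hpy⟩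
    · exact hI _ (hp a ha) (hpx ▸ hp _ hx)
    · exact hcross a ha hpy
    · exact hcross b hb hpx
    · exact hI _ (hp b hb) (hpy ▸ hp _ hy)

end ParentTree

section Automorphism

variable {V : Type*} {G T : SimpleGraph V}

lemma inn_map {W : Type*} (e : V ≃ W) : inn (T.map e) = e '' inn T := by
  ext v
  obtain ⟨w, rfl⟩ := e.surjective v
  have h := T.neighborSet_map e.toEmbedding w
  simp only [Equiv.coe_toEmbedding] at h
  simp only [inn, degN, Set.mem_ofPred_eq, e.injective.mem_set_image, h,
    Set.ncard_image_of_injective _ e.injective]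

lemma IsSpanningTreeOf.map {W : Type*} {G' : SimpleGraph W} (φ : G ≃g G')
    (hT : IsSpanningTreeOf G T) : IsSpanningTreeOf G' (T.map φ) := by
  refine ⟨?_, (Iso.map φ.toEquiv T).isTree_iff.1 hT.2⟩
  rintro _ _ ⟨-, u, v, huv, rfl, rfl⟩
  exact φ.map_adj_iff.2 (hT.1 huv)

lemma disjoint_edgeSet_map_iff {W : Type*} {T' : SimpleGraph V} (f : V ↪ W) :
    Disjoint (T.map f).edgeSet (T'.map f).edgeSet ↔ Disjoint T.edgeSet T'.edgeSet := by
  rw [edgeSet_map, edgeSet_map, Set.disjoint_image_iff f.sym2Map.injective]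

theorem areCISTs_map_pow (φ : G ≃g G) (r : ℕ) (hT : IsSpanningTreeOf G T)
    (hinn : ∀ k, 0 < k → k < r → ∀ v ∈ inn T, (φ ^ k) v ∉ inn T)
    (hedge : ∀ k, 0 < k → k < r → Disjoint T.edgeSet (T.map (φ ^ k)).edgeSet) :
    AreCISTs G fun i : Fin r => T.map (φ ^ (i : ℕ)) := by
  have map_pow_add (i k : ℕ) : T.map (φ ^ (i + k)) = (T.map (φ ^ k)).map (φ ^ i) := by
    rw [map_map, pow_add, RelIso.coe_mul]
  refine ⟨fun i => hT.map _, fun i j hij => ?_, fun v i j hi hj => ?_⟩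
  · wlog hlt : (i : ℕ) < j generalizing i j
    · exact (this j i hij.symm (by omega)).symm
    obtain ⟨k, hk⟩ := Nat.exists_eq_add_of_lt hlt
    show Disjoint (T.map (φ ^ (i : ℕ))).edgeSet (T.map (φ ^ (j : ℕ))).edgeSet
    rw [hk, add_assoc, map_pow_add]
    exact (disjoint_edgeSet_map_iff (φ ^ (i : ℕ)).toEquiv.toEmbedding).2
      (hedge _ (by omega) (by omega))
  · by_contra hij
    wlog hlt : (i : ℕ) < j generalizing i j
    · exact this j i hj hi (Ne.symm hij) (by omega)
    obtain ⟨k, hk⟩ := Nat.exists_eq_add_of_lt hlt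
    have hi' : v ∈ (φ ^ (i : ℕ)) '' inn T := inn_map (φ ^ (i : ℕ)).toEquiv ▸ hi
    have hj' : v ∈ (φ ^ (j : ℕ)) '' inn T := inn_map (φ ^ (j : ℕ)).toEquiv ▸ hj
    obtain ⟨a, ha, rfl⟩ := hi'
    obtain ⟨b, hb, hab⟩ := hj'
    rw [hk, add_assoc, pow_add, RelIso.mul_apply] at hab
    exact hinn _ (by omega) (by omega) b hb ((φ ^ (i : ℕ)).injective hab ▸ ha)

end Automorphism

end SimpleGraph

namespace K5BoxCycle

variable {n : ℕ} [NeZero n]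

/-- The 3-cycle `0 ↦ 3 ↦ 4 ↦ 0`. -/
def rowCycle : Equiv.Perm (Fin 5) := Equiv.swap 0 3 * Equiv.swap 3 4

def shift :
    ((⊤ : SimpleGraph (Fin 5)) □ cycleGraph n) ≃g ((⊤ : SimpleGraph (Fin 5)) □ cycleGraph n) :=
  (Iso.completeGraph rowCycle).boxProd (cycleGraphAddRight 1)

lemma shift_apply (v : Fin 5 × Fin n) : shift v = (rowCycle v.1, v.2 + 1) := rfl

def root : Fin 5 × Fin n := (0, 0)

def innerVertices : Set (Fin 5 × Fin n) :=
  {v | v.1.val = 0 ∨ v.1.val = 1 ∧ v.2.val % 3 = 0 ∨ v.1.val = 2 ∧ v.2.val % 3 = 1}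

/-- Found by an exhaustive search among the parent maps into `innerVertices` that have period `3`
in the column outside row `0`. -/
def parent (v : Fin 5 × Fin n) : Fin 5 × Fin n :=
  match v.1.val, v.2.val % 3 with
  | 0, _ => (0, v.2 - 1)
  | 1, 2 => (1, v.2 + 1)
  | 1, _ => (0, v.2)
  | 2, 0 => (1, v.2)
  | 2, 1 => (0, v.2)
  | 2, _ => (2, v.2 - 1)
  | 3, 0 => (1, v.2)
  | _, 1 => (2, v.2)
  | _, _ => (0, v.2)

def rank (v : Fin 5 × Fin n) : ℕ :=
  3 * v.2.val + match v.1.val, v.2.val % 3 with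
  | 0, _ => 0
  | 1, 0 => 1
  | 2, 1 => 1
  | 1, 2 => 5
  | _, _ => 2

lemma parent_adj (hn : 2 ≤ n) (v : Fin 5 × Fin n) :
    ((⊤ : SimpleGraph (Fin 5)) □ cycleGraph n).Adj v (parent v) := by
  obtain ⟨⟨r, hr⟩, j⟩ := v
  have hc : j.val % 3 = 0 ∨ j.val % 3 = 1 ∨ j.val % 3 = 2 := by omega
  interval_cases r <;> rcases hc with hc | hc | hc <;>
    simp [parent, hc, boxProd_adj, cycleGraph_adj_add_one hn, cycleGraph_adj_sub_one hn]

lemma val_add_one_mod_three (hdvd : 3 ∣ n) (j : Fin n) :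
    (j + 1).val % 3 = (j.val % 3 + 1) % 3 := by
  have := Fin.val_add_one_cases j
  omega

lemma val_sub_one_mod_three (hdvd : 3 ∣ n) (j : Fin n) :
    (j - 1).val % 3 = (j.val % 3 + 2) % 3 := by
  have := Fin.val_sub_one_cases j
  omega

lemma rank_parent_lt (hdvd : 3 ∣ n) (v : Fin 5 × Fin n) (hv : v ≠ root) :
    rank (parent v) < rank v := by
  obtain ⟨⟨r, hr⟩, j⟩ := v
  have hv' : r ≠ 0 ∨ j.val ≠ 0 := by
    by_contra! h
    exact hv (Prod.ext (Fin.ext h.1) (Fin.ext h.2))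
  have := Fin.val_add_one_cases j
  have := Fin.val_sub_one_cases j
  have hc : j.val % 3 = 0 ∨ j.val % 3 = 1 ∨ j.val % 3 = 2 := by omega
  interval_cases r <;> rcases hc with hc | hc | hc <;>
    simp only [parent, rank, hc, val_add_one_mod_three hdvd, val_sub_one_mod_three hdvd,
      Fin.val_zero, Fin.val_one, Fin.val_two, Fin.isValue] <;> omega

lemma parent_mem_innerVertices (hdvd : 3 ∣ n) (v : Fin 5 × Fin n) :
    parent v ∈ innerVertices := by
  obtain ⟨⟨r, hr⟩, j⟩ := v
  have hc : j.val % 3 = 0 ∨ j.val % 3 = 1 ∨ j.val % 3 = 2 := by omega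
  interval_cases r <;> rcases hc with hc | hc | hc <;>
    simp [parent, innerVertices, hc, val_add_one_mod_three hdvd, val_sub_one_mod_three hdvd]

lemma shift_pow_not_mem_innerVertices (hdvd : 3 ∣ n) (k : ℕ) (hk0 : 0 < k) (hk3 : k < 3)
    (v : Fin 5 × Fin n) (hv : v ∈ innerVertices) : (shift ^ k) v ∉ innerVertices := by
  obtain ⟨⟨r, hr⟩, j⟩ := v
  have hc : j.val % 3 = 0 ∨ j.val % 3 = 1 ∨ j.val % 3 = 2 := by omega
  obtain rfl | rfl : k = 1 ∨ k = 2 := by omega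
  all_goals
    interval_cases r <;> rcases hc with hc | hc | hc <;>
      simp [innerVertices, sq, RelIso.mul_apply, shift_apply, rowCycle, Equiv.swap_apply_def, hc,
        val_add_one_mod_three hdvd] at hv ⊢

lemma parent_shift_pow_parent_ne (hdvd : 3 ∣ n) (k : ℕ) (hk0 : 0 < k) (hk3 : k < 3)
    (v : Fin 5 × Fin n) : parent ((shift ^ k) (parent v)) ≠ (shift ^ k) v := by
  obtain ⟨⟨r, hr⟩, j⟩ := v
  have hn : 3 ≤ n := Nat.le_of_dvd (NeZero.pos n) hdvd
  have hcol : j + 1 + 1 ≠ j ∧ j - 1 ≠ j + 1 := by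
    have := Fin.val_add_one_cases j
    have := Fin.val_sub_one_cases j
    have := Fin.val_add_one_cases (j + 1)
    simp only [ne_eq, Fin.ext_iff]
    omega
  have hc : j.val % 3 = 0 ∨ j.val % 3 = 1 ∨ j.val % 3 = 2 := by omega
  obtain rfl | rfl : k = 1 ∨ k = 2 := by omega
  all_goals
    interval_cases r <;> rcases hc with hc | hc | hc <;>
      simp [parent, sq, RelIso.mul_apply, shift_apply, rowCycle, Equiv.swap_apply_def, hc,
        val_add_one_mod_three hdvd, Prod.ext_iff, hcol]

theorem areCISTs_map_shift_pow (hdvd : 3 ∣ n) :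
    AreCISTs ((⊤ : SimpleGraph (Fin 5)) □ cycleGraph n)
      fun i : Fin 3 => (parentTree parent root).map (shift ^ (i : ℕ)) := by
  have hn : 3 ≤ n := Nat.le_of_dvd (NeZero.pos n) hdvd
  have hp (v : Fin 5 × Fin n) (_ : v ≠ root) : parent v ∈ innerVertices :=
    parent_mem_innerVertices hdvd v
  have hT : IsSpanningTreeOf _ (parentTree parent root) :=
    ⟨parentTree_le fun v _ => parent_adj (by omega) v, parentTree_isTree (rank_parent_lt hdvd)⟩
  refine areCISTs_map_pow shift 3 hT (fun k hk0 hk3 v hv hv' => ?_) fun k hk0 hk3 => ?_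
  · exact shift_pow_not_mem_innerVertices hdvd k hk0 hk3 v (inn_parentTree_subset hp hv)
      (inn_parentTree_subset hp hv')
  · exact disjoint_edgeSet_parentTree_map _ hp (shift_pow_not_mem_innerVertices hdvd k hk0 hk3)
      fun v _ => parent_shift_pow_parent_ne hdvd k hk0 hk3 v

end K5BoxCycle

/-- For every `n ≥ 3` with `n ≡ 0 (mod 3)`, there exist three completely
independent spanning trees in `K_5 □ C_n`. -/
theorem stmt_14 (n : ℕ) (hn : 3 ≤ n) (hdvd : 3 ∣ n) :
    ∃ T : Fin 3 → SimpleGraph (Fin 5 × Fin n),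
      AreCISTs ((⊤ : SimpleGraph (Fin 5)) □ cycleGraph n) T :=
  have : NeZero n := ⟨by omega⟩
  ⟨_, K5BoxCycle.areCISTs_map_shift_pow hdvd⟩
end
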